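/- arXiv:2308.00469 — 2 statements merged into one kernel-verified Lean document; each statement's English description precedes it below -/
import Mathlib

section
/- Let A be a d×d real symmetric matrix with spectral decomposition A = UΛUᵀ, where U is orthogonal and Λ = diag(λ₁,…,λ_d). Let Λ̄ be the diagonal matrix with Λ̄_{ii} = min(max(λᵢ, ζ^{-1}), τ^{-1}), i.e. each eigenvalue is clamped to the interval [ζ^{-1}, τ^{-1}]. Then UΛ̄Uᵀ is the unique minimizer of the Frobenius distance ‖A − X‖_F over X ∈ S; that is, Π_S(A) = UΛ̄Uᵀ. -/
open MeasureTheory ProbabilityTheory Matrix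
open scoped BigOperators RealInnerProductSpace

noncomputable section

abbrev Vec (d : ℕ) := EuclideanSpace ℝ (Fin d)
abbrev Mat (d : ℕ) := Matrix (Fin d) (Fin d) ℝ

/-- View a Euclidean vector as a plain function. -/
def toPi {d : ℕ} (u : Vec d) : Fin d → ℝ := u
/-- View a plain function as a Euclidean vector. -/
def ofPi {d : ℕ} (u : Fin d → ℝ) : Vec d := WithLp.toLp 2 u

/-- Matrix-vector multiplication on Euclidean space. -/
def mvec {d : ℕ} (A : Mat d) (u : Vec d) : Vec d := ofPi (A.mulVec (toPi u))

/-- The standard Gaussian measure N(0, I_d) on ℝ^d. -/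
def gaussD (d : ℕ) : Measure (Vec d) :=
  (Measure.pi fun _ : Fin d => gaussianReal 0 1).map (MeasurableEquiv.toLp 2 (Fin d → ℝ))

/-- Frobenius norm of a matrix. -/
def matFrobNorm {m n : ℕ} (A : Matrix (Fin m) (Fin n) ℝ) : ℝ :=
  Real.sqrt (∑ i, ∑ j, (A i j) ^ 2)

/-- Operator (spectral) norm of a matrix. -/
def matOpNorm {m n : ℕ} (A : Matrix (Fin m) (Fin n) ℝ) : ℝ :=
  ‖LinearMap.toContinuousLinearMap (Matrix.toEuclideanLin A)‖

/-- Loewner order `A ⪯ B`. -/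
def loeLE {d : ℕ} (A B : Mat d) : Prop := (B - A).PosSemidef

/-- Hessian matrix of `f` at `x`. -/
def hess {d : ℕ} (f : Vec d → ℝ) (x : Vec d) : Mat d :=
  Matrix.of fun i j =>
    iteratedFDeriv ℝ 2 f x ![EuclideanSpace.single i 1, EuclideanSpace.single j 1]

/-- Membership in `S = {Σ symmetric : ζ⁻¹ I ⪯ Σ ⪯ τ⁻¹ I}`. -/
def Smem {d : ℕ} (τ ζ : ℝ) (A : Mat d) : Prop :=
  A.IsSymm ∧ loeLE (ζ⁻¹ • 1) A ∧ loeLE A (τ⁻¹ • 1)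

/-- Membership in `S' = {A symmetric : τ I ⪯ A ⪯ ζ I}`. -/
def S'mem {d : ℕ} (τ ζ : ℝ) (A : Mat d) : Prop :=
  A.IsSymm ∧ loeLE (τ • 1) A ∧ loeLE A (ζ • 1)

/-- The positive semidefinite square root, as `Matrix.PosSemidef.sqrt` was defined in older Mathlib. -/
def psdSqrt {d : ℕ} {S : Mat d} (hS : S.PosSemidef) : Mat d :=
  hS.1.eigenvectorUnitary.1 * diagonal ((↑) ∘ (√·) ∘ hS.1.eigenvalues) *
  (star hS.1.eigenvectorUnitary : Mat d)

/-- The regularized reparameterized objective `Q_α(μ, Σ)`. -/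
def Qa {d : ℕ} (f : Vec d → ℝ) (α : ℝ) (μ : Vec d) (S : Mat d) (hS : S.PosSemidef) : ℝ :=
  (∫ u, f (μ + α • mvec (psdSqrt hS) u) ∂ gaussD d) - α ^ 2 / 2 * Real.log S.det

/-!
Orthogonal conjugation preserves both the Frobenius norm and `S`, so everything reduces to
`A = Λ` diagonal. The diagonal entries of any `B ∈ S` lie in `[ζ⁻¹, τ⁻¹]`, and clamping is the
projection onto that interval, so `(λᵢ - λ̄ᵢ)² + (λ̄ᵢ - Bᵢᵢ)² ≤ (λᵢ - Bᵢᵢ)²`; the off-diagonal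
entries of `B` only add to `‖Λ - B‖²`. Hence `‖A - P‖² + ‖P - X‖² ≤ ‖A - X‖²` for every
`X ∈ S`, where `P = UΛ̄Uᵀ`, which gives both minimality and uniqueness.
-/

section Frobenius

variable {m n : ℕ}

lemma matFrobNorm_nonneg (M : Matrix (Fin m) (Fin n) ℝ) : 0 ≤ matFrobNorm M :=
  Real.sqrt_nonneg _

lemma matFrobNorm_sq (M : Matrix (Fin m) (Fin n) ℝ) :
    matFrobNorm M ^ 2 = ∑ i, ∑ j, M i j ^ 2 :=
  Real.sq_sqrt (by positivity)

lemma matFrobNorm_sq_eq_trace (M : Matrix (Fin m) (Fin n) ℝ) :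
    matFrobNorm M ^ 2 = trace (Mᵀ * M) := by
  rw [matFrobNorm_sq, Finset.sum_comm]
  simp [trace, mul_apply, sq]

lemma matFrobNorm_eq_zero_iff {M : Matrix (Fin m) (Fin n) ℝ} : matFrobNorm M = 0 ↔ M = 0 := by
  rw [← sq_eq_zero_iff, matFrobNorm_sq,
    Finset.sum_eq_zero_iff_of_nonneg fun _ _ => by positivity]
  simp only [Finset.mem_univ, true_implies,
    Finset.sum_eq_zero_iff_of_nonneg fun _ _ => sq_nonneg _, sq_eq_zero_iff]
  exact ⟨fun h => ext h, fun h i j => by simp [h]⟩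

lemma matFrobNorm_mul_mul_transpose {U : Matrix (Fin m) (Fin n) ℝ} (hU : Uᵀ * U = 1)
    (M : Mat n) : matFrobNorm (U * M * Uᵀ) = matFrobNorm M := by
  refine (sq_eq_sq₀ (matFrobNorm_nonneg _) (matFrobNorm_nonneg _)).mp ?_
  have hcollapse : (U * M * Uᵀ)ᵀ * (U * M * Uᵀ) = U * (Mᵀ * M) * Uᵀ := by
    simp only [transpose_mul, transpose_transpose, Matrix.mul_assoc]
    rw [← Matrix.mul_assoc Uᵀ U, hU, Matrix.one_mul]
  rw [matFrobNorm_sq_eq_trace, matFrobNorm_sq_eq_trace, hcollapse, trace_mul_cycle, hU,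
    Matrix.one_mul]

end Frobenius

section Loewner

variable {d : ℕ}

lemma loeLE.conj {A B : Mat d} (h : loeLE A B) (V : Mat d) :
    loeLE (V * A * Vᵀ) (V * B * Vᵀ) := by
  unfold loeLE
  rw [← Matrix.sub_mul, ← Matrix.mul_sub]
  simpa using h.mul_mul_conjTranspose_same V

lemma loeLE_diagonal_iff {a b : Fin d → ℝ} : loeLE (diagonal a) (diagonal b) ↔ ∀ i, a i ≤ b i := by
  simp [loeLE, diagonal_sub, sub_nonneg]

lemma le_apply_self_of_smul_one_loeLE {a : ℝ} {B : Mat d} (h : loeLE (a • 1) B) (i : Fin d) :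
    a ≤ B i i := by
  simpa [sub_nonneg] using h.diag_nonneg (i := i)

lemma apply_self_le_of_loeLE_smul_one {a : ℝ} {B : Mat d} (h : loeLE B (a • 1)) (i : Fin d) :
    B i i ≤ a := by
  simpa [sub_nonneg] using h.diag_nonneg (i := i)

variable {τ ζ : ℝ}

lemma Smem.conj {X V : Mat d} (hX : Smem τ ζ X) (hV : V * Vᵀ = 1) : Smem τ ζ (V * X * Vᵀ) := by
  obtain ⟨hsymm, hlower, hupper⟩ := hX
  refine ⟨?_, ?_, ?_⟩
  · simp [IsSymm, transpose_mul, hsymm.eq, Matrix.mul_assoc]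
  · simpa [hV] using loeLE.conj hlower V
  · simpa [hV] using loeLE.conj hupper V

lemma Smem.apply_self_mem_Icc {B : Mat d} (hB : Smem τ ζ B) (i : Fin d) :
    B i i ∈ Set.Icc ζ⁻¹ τ⁻¹ :=
  ⟨le_apply_self_of_smul_one_loeLE hB.2.1 i, apply_self_le_of_loeLE_smul_one hB.2.2 i⟩

lemma smem_diagonal {c : Fin d → ℝ} (hc : ∀ i, c i ∈ Set.Icc ζ⁻¹ τ⁻¹) : Smem τ ζ (diagonal c) := by
  refine ⟨isSymm_diagonal c, ?_, ?_⟩ <;>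
    rw [smul_one_eq_diagonal, loeLE_diagonal_iff] <;> intro i
  exacts [(hc i).1, (hc i).2]

end Loewner

lemma sq_sub_clamp_add_sq_le {a b l t : ℝ} (hab : a ≤ b) (ht : t ∈ Set.Icc a b) :
    (l - min (max l a) b) ^ 2 + (min (max l a) b - t) ^ 2 ≤ (l - t) ^ 2 := by
  -- the obtuse-angle property of the projection onto an interval
  have hobtuse : 0 ≤ (l - min (max l a) b) * (min (max l a) b - t) := by
    obtain ⟨hat, htb⟩ := ht
    rcases le_total l a with hla | hal
    · rw [max_eq_right hla, min_eq_left hab]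
      nlinarith
    rcases le_total l b with hlb | hbl
    · simp [max_eq_left hal, min_eq_left hlb]
    · rw [max_eq_left hal, min_eq_right hbl]
      nlinarith
  nlinarith

section Projection

variable {d : ℕ}

lemma matFrobNorm_sq_diagonal_clamp_add_le {a b : ℝ} (hab : a ≤ b) (lam : Fin d → ℝ)
    {B : Mat d} (hB : ∀ i, B i i ∈ Set.Icc a b) :
    matFrobNorm (diagonal lam - diagonal (fun i => min (max (lam i) a) b)) ^ 2
        + matFrobNorm (diagonal (fun i => min (max (lam i) a) b) - B) ^ 2
      ≤ matFrobNorm (diagonal lam - B) ^ 2 := by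
  simp only [matFrobNorm_sq, ← Finset.sum_add_distrib]
  refine Finset.sum_le_sum fun i _ => Finset.sum_le_sum fun j _ => ?_
  by_cases hij : i = j
  · subst hij
    simpa using sq_sub_clamp_add_sq_le hab (hB i)
  · simp [diagonal_apply_ne _ hij]

variable {τ ζ : ℝ}

lemma matFrobNorm_sq_sub_clamp_add_le (hζτ : ζ⁻¹ ≤ τ⁻¹) {U : Mat d} (hU : Uᵀ * U = 1)
    (lam : Fin d → ℝ) {X : Mat d} (hX : Smem τ ζ X) :
    matFrobNorm (U * diagonal lam * Uᵀ - U * diagonal (fun i => min (max (lam i) ζ⁻¹) τ⁻¹) * Uᵀ) ^ 2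
        + matFrobNorm (U * diagonal (fun i => min (max (lam i) ζ⁻¹) τ⁻¹) * Uᵀ - X) ^ 2
      ≤ matFrobNorm (U * diagonal lam * Uᵀ - X) ^ 2 := by
  have hU' : U * Uᵀ = 1 := mul_eq_one_comm.mp hU
  set B := Uᵀ * X * U
  have hXB : X = U * B * Uᵀ := by
    simp only [B, ← Matrix.mul_assoc, hU', Matrix.one_mul]
    rw [Matrix.mul_assoc, hU', Matrix.mul_one]
  have hB : Smem τ ζ B := by simpa using Smem.conj (V := Uᵀ) hX (by simpa using hU)
  rw [hXB, ← Matrix.sub_mul, ← Matrix.mul_sub, ← Matrix.sub_mul, ← Matrix.mul_sub,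
    ← Matrix.sub_mul, ← Matrix.mul_sub, matFrobNorm_mul_mul_transpose hU,
    matFrobNorm_mul_mul_transpose hU, matFrobNorm_mul_mul_transpose hU]
  exact matFrobNorm_sq_diagonal_clamp_add_le hζτ lam (Smem.apply_self_mem_Icc hB)

end Projection

theorem stmt6_general {d : ℕ} (τ ζ : ℝ) (hτ : 0 < τ) (hτζ : τ ≤ ζ)
    (A U : Mat d) (lam : Fin d → ℝ)
    (hU2 : Uᵀ * U = 1)
    (hdecomp : A = U * Matrix.diagonal lam * Uᵀ) :
    Smem τ ζ (U * Matrix.diagonal (fun i => min (max (lam i) ζ⁻¹) τ⁻¹) * Uᵀ) ∧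
    (∀ X : Mat d, Smem τ ζ X →
      matFrobNorm (A - U * Matrix.diagonal (fun i => min (max (lam i) ζ⁻¹) τ⁻¹) * Uᵀ)
        ≤ matFrobNorm (A - X)) ∧
    (∀ X : Mat d, Smem τ ζ X →
      (∀ Y : Mat d, Smem τ ζ Y → matFrobNorm (A - X) ≤ matFrobNorm (A - Y)) →
      X = U * Matrix.diagonal (fun i => min (max (lam i) ζ⁻¹) τ⁻¹) * Uᵀ) := by
  set P := U * Matrix.diagonal (fun i => min (max (lam i) ζ⁻¹) τ⁻¹) * Uᵀ
  have hζτ : ζ⁻¹ ≤ τ⁻¹ := inv_anti₀ hτ hτζ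
  have hP : Smem τ ζ P :=
    (smem_diagonal fun i => ⟨le_min (le_max_right _ _) hζτ, min_le_right _ _⟩).conj
      (mul_eq_one_comm.mp hU2)
  have hpyth (X : Mat d) (hX : Smem τ ζ X) :
      matFrobNorm (A - P) ^ 2 + matFrobNorm (P - X) ^ 2 ≤ matFrobNorm (A - X) ^ 2 :=
    hdecomp ▸ matFrobNorm_sq_sub_clamp_add_le hζτ hU2 lam hX
  refine ⟨hP, fun X hX => ?_, fun X hX hmin => ?_⟩
  · refine (pow_le_pow_iff_left₀ (matFrobNorm_nonneg _) (matFrobNorm_nonneg _) two_ne_zero).mp ?_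
    linarith [hpyth X hX, sq_nonneg (matFrobNorm (P - X))]
  · have hXP : matFrobNorm (A - X) ^ 2 ≤ matFrobNorm (A - P) ^ 2 :=
      pow_le_pow_left₀ (matFrobNorm_nonneg _) (hmin P hP) 2
    have hPX : matFrobNorm (P - X) ^ 2 = 0 :=
      le_antisymm (by linarith [hpyth X hX]) (sq_nonneg _)
    exact (sub_eq_zero.mp (matFrobNorm_eq_zero_iff.mp (pow_eq_zero_iff two_ne_zero |>.mp hPX))).symm

/-- the Frobenius projection of a symmetric matrix `A = UΛUᵀ` onto `S`
is obtained by clamping the eigenvalues of `A` to `[ζ⁻¹, τ⁻¹]`: `Π_S(A) = UΛ̄Uᵀ`,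
the unique Frobenius-distance minimizer over `S`. -/
theorem stmt6 {d : ℕ} (hd : 1 ≤ d) (τ ζ : ℝ) (hτ : 0 < τ) (hτζ : τ ≤ ζ)
    (A U : Mat d) (hA : A.IsSymm) (lam : Fin d → ℝ)
    (hU1 : U * Uᵀ = 1) (hU2 : Uᵀ * U = 1)
    (hdecomp : A = U * Matrix.diagonal lam * Uᵀ) :
    Smem τ ζ (U * Matrix.diagonal (fun i => min (max (lam i) ζ⁻¹) τ⁻¹) * Uᵀ) ∧
    (∀ X : Mat d, Smem τ ζ X →
      matFrobNorm (A - U * Matrix.diagonal (fun i => min (max (lam i) ζ⁻¹) τ⁻¹) * Uᵀ)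
        ≤ matFrobNorm (A - X)) ∧
    (∀ X : Mat d, Smem τ ζ X →
      (∀ Y : Mat d, Smem τ ζ Y → matFrobNorm (A - X) ≤ matFrobNorm (A - Y)) →
      X = U * Matrix.diagonal (fun i => min (max (lam i) ζ⁻¹) τ⁻¹) * Uᵀ) :=
  stmt6_general τ ζ hτ hτζ A U lam hU2 hdecomp
end
end

section
/- Suppose f : ℝ^d → ℝ is twice continuously differentiable, σ-strongly convex, and has γ-Lipschitz Hessian, with minimizer μ*. Let ρ₁ ∈ (0,1), Δ ≥ 0, and let (μ_t)_{t≥1} be a sequence in ℝ^d satisfying f(μ_{t+1}) − f(μ*) ≤ (1 − ρ₁)·(f(μ_t) − f(μ*)) + Δ for all t ≥ 1. Then for every k ≥ 2, Σ_{t=2}^k ‖Π_{S'}(∇²f(μ_t)) − Π_{S'}(∇²f(μ*))‖_F² ≤ Σ_{t=2}^k ‖∇²f(μ_t) − ∇²f(μ*)‖_F² ≤ (2γ²/(ρ₁σ))·((f(μ₁) − f(μ*)) + (k−1)·Δ). -/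
open MeasureTheory ProbabilityTheory Matrix
open scoped BigOperators RealInnerProductSpace

noncomputable section

/-!
Strong convexity at the minimizer gives quadratic growth `σ/2 ‖x - μ*‖² ≤ f x - f μ*`, so the
Lipschitz Hessian bounds each squared Hessian drift by `(2γ²/σ) (f (μ t) - f μ*)`. Summing the
linear recursion bounds `ρ₁ ∑ₜ (f (μ t) - f μ*)` by the initial gap plus the accumulated errors.
The projected inequality is nonexpansiveness of the nearest-point map onto the convex set `S'`,
which holds in any real inner product space; the Frobenius norm is the Euclidean norm of the
entries.
-/

open Finset

section NearestPoint

variable {F : Type*} [NormedAddCommGroup F] [InnerProductSpace ℝ F]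

theorem inner_sub_nearest_le_zero {K : Set F} (hK : Convex ℝ K) {x px : F} (hpx : px ∈ K)
    (hx : ∀ z ∈ K, ‖x - px‖ ≤ ‖x - z‖) {z : F} (hz : z ∈ K) : ⟪x - px, z - px⟫ ≤ 0 := by
  have : Nonempty K := ⟨⟨px, hpx⟩⟩
  have hinf : ‖x - px‖ = ⨅ w : K, ‖x - w‖ :=
    le_antisymm (le_ciInf fun w => hx w w.2)
      (ciInf_le ⟨0, Set.forall_mem_range.2 fun _ => norm_nonneg _⟩ (⟨px, hpx⟩ : K))
  exact (norm_eq_iInf_iff_real_inner_le_zero hK hpx).1 hinf z hz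

theorem norm_sub_le_of_nearest {K : Set F} (hK : Convex ℝ K) {x y px py : F}
    (hpx : px ∈ K) (hpy : py ∈ K) (hx : ∀ z ∈ K, ‖x - px‖ ≤ ‖x - z‖)
    (hy : ∀ z ∈ K, ‖y - py‖ ≤ ‖y - z‖) : ‖px - py‖ ≤ ‖x - y‖ := by
  have h₁ := inner_sub_nearest_le_zero hK hpx hx hpy
  have h₂ := inner_sub_nearest_le_zero hK hpy hy hpx
  have key : ‖px - py‖ ^ 2 ≤ ‖x - y‖ * ‖px - py‖ := by
    calc ‖px - py‖ ^ 2 ≤ ⟪x - y, px - py⟫ := by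
          rw [← real_inner_self_eq_norm_sq]
          simp only [inner_sub_left, inner_sub_right, real_inner_comm px py] at h₁ h₂ ⊢
          linarith
      _ ≤ ‖x - y‖ * ‖px - py‖ := real_inner_le_norm _ _
  rcases (norm_nonneg (px - py)).eq_or_lt with h | h
  · rw [← h]; exact norm_nonneg _
  · nlinarith

end NearestPoint

theorem sq_norm_sub_le_of_strongConvex_of_isMin {F : Type*} [NormedAddCommGroup F]
    [InnerProductSpace ℝ F] [CompleteSpace F] {f : F → ℝ} {σ : ℝ}
    (hσ : ∀ x y : F, f x - f y ≥ ⟪gradient f y, x - y⟫ + σ / 2 * ‖x - y‖ ^ 2)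
    {m : F} (hm : ∀ z, f m ≤ f z) (x : F) : σ / 2 * ‖x - m‖ ^ 2 ≤ f x - f m := by
  have hgrad : gradient f m = 0 := by
    rw [gradient, IsLocalMin.fderiv_eq_zero (.of_forall hm), map_zero]
  simpa [hgrad] using hσ x m

theorem mul_sum_Icc_le_of_le_linear_decay {e : ℕ → ℝ} {ρ Δ : ℝ} (hρ0 : 0 ≤ ρ) (hρ1 : ρ ≤ 1)
    (he : ∀ t, 0 ≤ e t) (hrec : ∀ t, 1 ≤ t → e (t + 1) ≤ (1 - ρ) * e t + Δ)
    {k : ℕ} (hk : 1 ≤ k) : ρ * ∑ t ∈ Icc 2 k, e t ≤ e 1 + ((k : ℝ) - 1) * Δ := by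
  -- the slack `(1 - ρ) * e k` absorbs the next recursion step
  have inv : ρ * ∑ t ∈ Icc 2 k, e t + (1 - ρ) * e k ≤ e 1 + ((k : ℝ) - 1) * Δ := by
    induction k, hk using Nat.le_induction with
    | base => simpa [sub_mul] using mul_nonneg hρ0 (he 1)
    | succ n hn ih =>
      rw [sum_Icc_succ_top (by omega)]
      push_cast
      nlinarith [hrec n hn, he (n + 1)]
  nlinarith [he k]

section Frobenius

variable {d : ℕ}

def frobEmbedding : Mat d →ₗ[ℝ] EuclideanSpace ℝ (Fin d × Fin d) where
  toFun A := WithLp.toLp 2 fun p => A p.1 p.2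
  map_add' _ _ := rfl
  map_smul' _ _ := rfl

theorem matFrobNorm_eq_norm_frobEmbedding (A : Mat d) : matFrobNorm A = ‖frobEmbedding A‖ := by
  rw [EuclideanSpace.norm_eq, matFrobNorm, Fintype.sum_prod_type]
  simp only [frobEmbedding, Real.norm_eq_abs, sq_abs]
  rfl

theorem convex_setOf_S'mem (τ ζ : ℝ) : Convex ℝ {A : Mat d | S'mem τ ζ A} := by
  rintro A ⟨hAs, hAl, hAu⟩ B ⟨hBs, hBl, hBu⟩ a b ha hb hab
  obtain rfl : b = 1 - a := by linarith
  refine ⟨(hAs.smul a).add (hBs.smul _), ?_, ?_⟩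
  · have h : a • A + (1 - a) • B - τ • (1 : Mat d)
        = a • (A - τ • 1) + (1 - a) • (B - τ • 1) := by module
    rw [loeLE, h]
    exact (hAl.smul ha).add (hBl.smul hb)
  · have h : ζ • (1 : Mat d) - (a • A + (1 - a) • B)
        = a • (ζ • 1 - A) + (1 - a) • (ζ • 1 - B) := by module
    rw [loeLE, h]
    exact (hAu.smul ha).add (hBu.smul hb)

theorem matFrobNorm_proj_sub_le {τ ζ : ℝ} {proj : Mat d → Mat d}
    (hproj : ∀ A : Mat d, S'mem τ ζ (proj A) ∧
      ∀ X : Mat d, S'mem τ ζ X → matFrobNorm (A - proj A) ≤ matFrobNorm (A - X))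
    (A B : Mat d) : matFrobNorm (proj A - proj B) ≤ matFrobNorm (A - B) := by
  have nearest : ∀ C : Mat d, ∀ z ∈ frobEmbedding '' {X | S'mem τ ζ X},
      ‖frobEmbedding C - frobEmbedding (proj C)‖ ≤ ‖frobEmbedding C - z‖ := by
    rintro C _ ⟨X, hX, rfl⟩
    simpa only [← map_sub, ← matFrobNorm_eq_norm_frobEmbedding] using (hproj C).2 X hX
  simpa only [← map_sub, ← matFrobNorm_eq_norm_frobEmbedding] using
    norm_sub_le_of_nearest ((convex_setOf_S'mem τ ζ).linear_image frobEmbedding)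
      ⟨_, (hproj A).1, rfl⟩ ⟨_, (hproj B).1, rfl⟩ (nearest A) (nearest B)

end Frobenius

theorem stmt18_general {d : ℕ} (τ ζ σ γ ρ₁ Δ : ℝ) (hσ0 : 0 < σ) (hρ0 : 0 < ρ₁) (hρ1 : ρ₁ < 1)
    (f : Vec d → ℝ)
    (hσ : ∀ x y : Vec d, f x - f y ≥ ⟪gradient f y, x - y⟫ + σ / 2 * ‖x - y‖ ^ 2)
    (hγF : ∀ x y : Vec d, matFrobNorm (hess f x - hess f y) ≤ γ * ‖x - y‖)
    (μstar : Vec d) (hμstar : ∀ z, f μstar ≤ f z)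
    (μ : ℕ → Vec d)
    (hrec : ∀ t : ℕ, 1 ≤ t → f (μ (t + 1)) - f μstar ≤ (1 - ρ₁) * (f (μ t) - f μstar) + Δ)
    (proj : Mat d → Mat d)
    (hproj : ∀ A : Mat d, S'mem τ ζ (proj A) ∧
      ∀ X : Mat d, S'mem τ ζ X → matFrobNorm (A - proj A) ≤ matFrobNorm (A - X))
    (k : ℕ) (hk : 2 ≤ k) :
    (∑ t ∈ Finset.Icc 2 k, matFrobNorm (proj (hess f (μ t)) - proj (hess f μstar)) ^ 2)
        ≤ (∑ t ∈ Finset.Icc 2 k, matFrobNorm (hess f (μ t) - hess f μstar) ^ 2) ∧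
    (∑ t ∈ Finset.Icc 2 k, matFrobNorm (hess f (μ t) - hess f μstar) ^ 2)
        ≤ 2 * γ ^ 2 / (ρ₁ * σ) * ((f (μ 1) - f μstar) + ((k : ℝ) - 1) * Δ) := by
  set e : ℕ → ℝ := fun t => f (μ t) - f μstar
  have hterm (t : ℕ) : matFrobNorm (hess f (μ t) - hess f μstar) ^ 2 ≤ 2 * γ ^ 2 / σ * e t := by
    have hgrowth := sq_norm_sub_le_of_strongConvex_of_isMin hσ hμstar (μ t)
    calc matFrobNorm (hess f (μ t) - hess f μstar) ^ 2 ≤ (γ * ‖μ t - μstar‖) ^ 2 :=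
          pow_le_pow_left₀ (Real.sqrt_nonneg _) (hγF _ _) 2
      _ = 2 * γ ^ 2 / σ * (σ / 2 * ‖μ t - μstar‖ ^ 2) := by field_simp
      _ ≤ 2 * γ ^ 2 / σ * e t := by gcongr
  have hsum : ρ₁ * ∑ t ∈ Icc 2 k, e t ≤ e 1 + ((k : ℝ) - 1) * Δ :=
    mul_sum_Icc_le_of_le_linear_decay hρ0.le hρ1.le (fun t => sub_nonneg.2 (hμstar _)) hrec
      (by omega)
  refine ⟨sum_le_sum fun t _ =>
    pow_le_pow_left₀ (Real.sqrt_nonneg _) (matFrobNorm_proj_sub_le hproj _ _) 2, ?_⟩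
  calc ∑ t ∈ Icc 2 k, matFrobNorm (hess f (μ t) - hess f μstar) ^ 2
      ≤ 2 * γ ^ 2 / σ * ∑ t ∈ Icc 2 k, e t := by
        rw [mul_sum]; exact sum_le_sum fun t _ => hterm t
    _ = 2 * γ ^ 2 / (ρ₁ * σ) * (ρ₁ * ∑ t ∈ Icc 2 k, e t) := by field_simp
    _ ≤ 2 * γ ^ 2 / (ρ₁ * σ) * (e 1 + ((k : ℝ) - 1) * Δ) := by gcongr

/-- cumulative Hessian-drift bound along a linearly convergent sequence,
where `proj = Π_{S'}` is the Frobenius projection onto `S'` (a nonexpansive map given by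
its minimizing property). -/
theorem stmt18 {d : ℕ} (hd : 1 ≤ d) (τ ζ σ γ ρ₁ Δ : ℝ)
    (hτ : 0 < τ) (hτζ : τ ≤ ζ) (hσ0 : 0 < σ) (hγ0 : 0 ≤ γ)
    (hρ0 : 0 < ρ₁) (hρ1 : ρ₁ < 1) (hΔ : 0 ≤ Δ)
    (f : Vec d → ℝ) (hf : ContDiff ℝ 2 f)
    (hσ : ∀ x y : Vec d, f x - f y ≥ ⟪gradient f y, x - y⟫ + σ / 2 * ‖x - y‖ ^ 2)
    (hγ : ∀ x y : Vec d, matOpNorm (hess f x - hess f y) ≤ γ * ‖x - y‖)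
    (hγF : ∀ x y : Vec d, matFrobNorm (hess f x - hess f y) ≤ γ * ‖x - y‖)
    (μstar : Vec d) (hμstar : ∀ z, f μstar ≤ f z)
    (μ : ℕ → Vec d)
    (hrec : ∀ t : ℕ, 1 ≤ t → f (μ (t + 1)) - f μstar ≤ (1 - ρ₁) * (f (μ t) - f μstar) + Δ)
    (proj : Mat d → Mat d)
    (hproj : ∀ A : Mat d, S'mem τ ζ (proj A) ∧
      ∀ X : Mat d, S'mem τ ζ X → matFrobNorm (A - proj A) ≤ matFrobNorm (A - X))
    (k : ℕ) (hk : 2 ≤ k) :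
    (∑ t ∈ Finset.Icc 2 k, matFrobNorm (proj (hess f (μ t)) - proj (hess f μstar)) ^ 2)
        ≤ (∑ t ∈ Finset.Icc 2 k, matFrobNorm (hess f (μ t) - hess f μstar) ^ 2) ∧
    (∑ t ∈ Finset.Icc 2 k, matFrobNorm (hess f (μ t) - hess f μstar) ^ 2)
        ≤ 2 * γ ^ 2 / (ρ₁ * σ) * ((f (μ 1) - f μstar) + ((k : ℝ) - 1) * Δ) :=
  stmt18_general τ ζ σ γ ρ₁ Δ hσ0 hρ0 hρ1 f hσ hγF μstar hμstar μ hrec proj hproj k hk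
end
end
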